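/- arXiv:1006.5687 — 2 statements merged into one kernel-verified Lean document; each statement's English description precedes it below -/
import Mathlib

section
/- Let X be a T₀ space. The following are equivalent: (1) the open blobs of X form a monoidal base of X, and for every subset A ⊆ X, the intersection ⋂_{x ∈ A} cl({x}) is the closure of a point; (2) with B the set of open blobs of X, (X, B) is an 𝕄-complete join semilattice; (3) there exists a monoidal base B of X such that (X, B) is an 𝕄-complete join semilattice; (4) there exists a monoidal base B of X such that (X, B) is isomorphic (as a space with monoidal base) to E(X, B); (5) there exist a monoidal base B of X and a T₀ space Y with monoidal base C such that (X, B) is isomorphic (as a space with monoidal base) to E(Y, C). -/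
open Set Topology TopologicalSpace

universe u v

/-- An ideal of a commutative monoid: closed under multiplication by arbitrary elements. -/
def IsMonoidIdeal {M : Type*} [CommMonoid M] (I : Set M) : Prop :=
  ∀ x ∈ I, ∀ m : M, x * m ∈ I

/-- A prime ideal of a commutative monoid: an ideal whose complement is a submonoid
(contains `1` and is closed under multiplication). -/
def IsMonoidPrime {M : Type*} [CommMonoid M] (p : Set M) : Prop :=
  IsMonoidIdeal p ∧ (1 : M) ∉ p ∧ ∀ x y : M, x ∉ p → y ∉ p → x * y ∉ p

/-- The Kato spectrum of a commutative monoid: the set of its prime ideals. -/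
def KatoSpec (M : Type*) [CommMonoid M] : Type _ :=
  {p : Set M // IsMonoidPrime p}

/-- The basic open set `D(f) = {p : f ∉ p}`. -/
def KatoD {M : Type*} [CommMonoid M] (f : M) : Set (KatoSpec M) :=
  {p | f ∉ p.1}

/-- The topology on the Kato spectrum, generated by the sets `D(f)`. -/
instance KatoSpec.instTopologicalSpace (M : Type*) [CommMonoid M] :
    TopologicalSpace (KatoSpec M) :=
  TopologicalSpace.generateFrom (Set.range fun f : M => KatoD f)

/-- A blob: the intersection of all open sets containing some point `a`. -/
def IsBlob {X : Type*} [TopologicalSpace X] (A : Set X) : Prop :=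
  ∃ a : X, A = ⋂₀ {U : Set X | IsOpen U ∧ a ∈ U}

/-- Condition (*): whenever an intersection of a family of open blobs is contained in an
open set `V`, some finite subfamily already has intersection contained in `V`. -/
def CondStar (X : Type*) [TopologicalSpace X] : Prop :=
  ∀ S : Set (Set X), (∀ U ∈ S, IsOpen U ∧ IsBlob U) →
    ∀ V : Set X, IsOpen V → ⋂₀ S ⊆ V →
      ∃ T : Finset (Set X), ↑T ⊆ S ∧ ⋂₀ (T : Set (Set X)) ⊆ V

/-- A monoidal base: a base of open sets containing the whole space and closed under
finite (binary) intersections. -/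
structure IsMonoidalBase {X : Type*} [TopologicalSpace X] (B : Set (Set X)) : Prop where
  open_mem : ∀ U ∈ B, IsOpen U
  is_base : ∀ V : Set X, IsOpen V → ∀ x ∈ V, ∃ U ∈ B, x ∈ U ∧ U ⊆ V
  univ_mem : Set.univ ∈ B
  inter_mem : ∀ U ∈ B, ∀ V ∈ B, U ∩ V ∈ B

/-- `(X, B)` is an 𝕄-complete join semilattice with respect to the explicit data of
a partial order `le` and a supremum operator `s`. -/
def IsMCJSWith {X : Type*} (B : Set (Set X)) (le : X → X → Prop) (s : Set X → X) : Prop :=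
  (∀ x, le x x) ∧
  (∀ x y z, le x y → le y z → le x z) ∧
  (∀ x y, le x y → le y x → x = y) ∧
  (∀ A : Set X, (∀ a ∈ A, le a (s A)) ∧ ∀ b : X, (∀ a ∈ A, le a b) → le (s A) b) ∧
  (∀ A : Set X, ∀ U ∈ B, (A ⊆ U ↔ s A ∈ U))

/-- `(X, B)` is an 𝕄-complete join semilattice: there is a partial order on `X` in which
every subset has a least upper bound, such that for `U ∈ B`, `A ⊆ U ↔ sup A ∈ U`. -/
def MCJS {X : Type*} (B : Set (Set X)) : Prop :=
  ∃ (le : X → X → Prop) (s : Set X → X), IsMCJSWith B le s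

/-- An isomorphism of spaces-with-monoidal-bases: a bijection such that both it and its
inverse pull back base elements to base elements. -/
def MIso {X Y : Type*} (B : Set (Set X)) (C : Set (Set Y)) : Prop :=
  ∃ f : X → Y, Function.Bijective f ∧ (∀ V ∈ C, f ⁻¹' V ∈ B) ∧ (∀ U ∈ B, f '' U ∈ C)

/-- The topology on the power set `𝒫(X)` generated by the sets `𝒫(U) = {A | A ⊆ U}`, `U ∈ B`. -/
def ExpTop {X : Type*} (B : Set (Set X)) : TopologicalSpace (Set X) :=
  TopologicalSpace.generateFrom {s : Set (Set X) | ∃ U ∈ B, s = {A : Set X | A ⊆ U}}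

/-- The equivalence relation `A ∼ A'` iff `A` and `A'` belong to the same open sets of `𝒫(X)`. -/
def ExpSetoid {X : Type*} (B : Set (Set X)) : Setoid (Set X) where
  r A A' := ∀ s : Set (Set X), (ExpTop B).IsOpen s → (A ∈ s ↔ A' ∈ s)
  iseqv := ⟨fun _ _ _ => Iff.rfl, fun h s hs => (h s hs).symm,
    fun h h' s hs => (h s hs).trans (h' s hs)⟩

/-- The exponential `E(X,B)`: the quotient of `𝒫(X)` identifying sets lying in the same
open sets. -/
def ExpSpace {X : Type*} (B : Set (Set X)) : Type _ :=
  Quotient (ExpSetoid B)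

/-- The class `[A]` of a subset `A ⊆ X` in `E(X,B)`. -/
def expMk {X : Type*} (B : Set (Set X)) (A : Set X) : ExpSpace B :=
  Quotient.mk (ExpSetoid B) A

/-- The quotient topology on `E(X,B)`. -/
instance ExpSpace.instTopologicalSpace {X : Type*} (B : Set (Set X)) :
    TopologicalSpace (ExpSpace B) :=
  (ExpTop B).coinduced (expMk B)

/-- The basic subset `Ũ = {[A] : A ⊆ U}` of `E(X,B)`. -/
def expBasic {X : Type*} (B : Set (Set X)) (U : Set X) : Set (ExpSpace B) :=
  {q | ∃ A : Set X, q = expMk B A ∧ A ⊆ U}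

/-- The monoidal base `B̃ = {Ũ : U ∈ B}` of `E(X,B)`. -/
def expBase {X : Type*} (B : Set (Set X)) : Set (Set (ExpSpace B)) :=
  {s | ∃ U ∈ B, s = expBasic B U}

/-- The natural map `i : X → E(X,B)`, `x ↦ [{x}]`. -/
def expI {X : Type*} (B : Set (Set X)) (x : X) : ExpSpace B :=
  expMk B {x}

/-- The canonical supremum in `E(X,B)`: the class of the union of all representatives. -/
def expSup {X : Type*} (B : Set (Set X)) (S : Set (ExpSpace B)) : ExpSpace B :=
  expMk B (⋃₀ {A : Set X | expMk B A ∈ S})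

/-- The specialization order: `a ≤ b` iff `b ∈ closure {a}`. -/
def specLE {Y : Type*} [TopologicalSpace Y] (a b : Y) : Prop :=
  b ∈ closure {a}

/-- The commutative monoid `(B, ∩)` attached to a monoidal base `B`, with identity `X`. -/
def baseMonoid {X : Type*} [TopologicalSpace X] {B : Set (Set X)} (hB : IsMonoidalBase B) :
    CommMonoid ↥B where
  mul U V := ⟨U.1 ∩ V.1, hB.inter_mem _ U.2 _ V.2⟩
  one := ⟨Set.univ, hB.univ_mem⟩
  mul_assoc U V W := Subtype.ext (Set.inter_assoc _ _ _)
  mul_comm U V := Subtype.ext (Set.inter_comm _ _)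
  one_mul U := Subtype.ext (Set.univ_inter _)
  mul_one U := Subtype.ext (Set.inter_univ _)


/-! ### Auxiliary lemmas -/

section AuxExp

variable {Y : Type*}

lemma exp_sim_iff (C : Set (Set Y)) (A A' : Set Y) :
    (ExpSetoid C).r A A' ↔ ∀ U ∈ C, (A ⊆ U ↔ A' ⊆ U) := by
  constructor
  · intro h U hU
    have := h {B : Set Y | B ⊆ U} (TopologicalSpace.GenerateOpen.basic _ ⟨U, hU, rfl⟩)
    simpa using this
  · intro h s hs
    induction hs with
    | basic t ht =>
        obtain ⟨U, hU, rfl⟩ := ht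
        simpa using h U hU
    | univ => simp
    | inter t₁ t₂ _ _ ih₁ ih₂ => exact and_congr ih₁ ih₂
    | sUnion S _ ih =>
        simp only [mem_sUnion]
        exact ⟨fun ⟨t, ht, hm⟩ => ⟨t, ht, (ih t ht).1 hm⟩,
               fun ⟨t, ht, hm⟩ => ⟨t, ht, (ih t ht).2 hm⟩⟩

lemma expMk_eq_iff (C : Set (Set Y)) (A A' : Set Y) :
    expMk C A = expMk C A' ↔ ∀ U ∈ C, (A ⊆ U ↔ A' ⊆ U) := by
  rw [← exp_sim_iff C A A']
  exact ⟨fun h => Quotient.exact h, fun h => Quotient.sound h⟩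

lemma mem_expBasic_iff (C : Set (Set Y)) {U : Set Y} (hU : U ∈ C) (A : Set Y) :
    expMk C A ∈ expBasic C U ↔ A ⊆ U := by
  constructor
  · rintro ⟨A', hq, hA'⟩
    exact ((expMk_eq_iff C A A').1 hq U hU).2 hA'
  · intro h; exact ⟨A, rfl, h⟩

lemma exp_rep (C : Set (Set Y)) (q : ExpSpace C) : ∃ A : Set Y, q = expMk C A :=
  ⟨Quotient.out q, (Quotient.out_eq q).symm⟩

/-- The exponential of any monoidal base data is an 𝕄-complete join semilattice. -/
lemma mcjs_exp (C : Set (Set Y)) : MCJS (expBase C) := by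
  refine ⟨fun q q' => ∀ U ∈ C, q' ∈ expBasic C U → q ∈ expBasic C U, expSup C,
    ?_, ?_, ?_, ?_, ?_⟩
  · intro q U hU h; exact h
  · intro q q' q'' h h' U hU hm; exact h U hU (h' U hU hm)
  · intro q q' h h'
    obtain ⟨A, rfl⟩ := exp_rep C q
    obtain ⟨A', rfl⟩ := exp_rep C q'
    refine (expMk_eq_iff C A A').2 fun U hU => ?_
    constructor
    · intro hA
      exact (mem_expBasic_iff C hU A').1 (h' U hU ((mem_expBasic_iff C hU A).2 hA))
    · intro hA'
      exact (mem_expBasic_iff C hU A).1 (h U hU ((mem_expBasic_iff C hU A').2 hA'))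
  · intro S
    constructor
    · intro q hq U hU hm
      obtain ⟨A, rfl⟩ := exp_rep C q
      rw [mem_expBasic_iff C hU]
      have hsub : ⋃₀ {A : Set Y | expMk C A ∈ S} ⊆ U := (mem_expBasic_iff C hU _).1 hm
      exact (subset_sUnion_of_mem hq).trans hsub
    · intro b hb U hU hm
      have : ⋃₀ {A : Set Y | expMk C A ∈ S} ⊆ U := by
        refine sUnion_subset fun A hA => ?_
        exact (mem_expBasic_iff C hU A).1 (hb (expMk C A) hA U hU hm)
      exact (mem_expBasic_iff C hU _).2 this
  · intro S V hV
    obtain ⟨U, hU, rfl⟩ := hV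
    constructor
    · intro hS
      refine (mem_expBasic_iff C hU _).2 (sUnion_subset fun A hA => ?_)
      exact (mem_expBasic_iff C hU A).1 (hS hA)
    · intro hm q hq
      obtain ⟨A, rfl⟩ := exp_rep C q
      rw [mem_expBasic_iff C hU]
      have hsub : ⋃₀ {A : Set Y | expMk C A ∈ S} ⊆ U := (mem_expBasic_iff C hU _).1 hm
      exact (subset_sUnion_of_mem hq).trans hsub

/-- 𝕄-complete join semilattice structure transports backwards along an `MIso`. -/
lemma mcjs_transport {X : Type*} {Z : Type*} {B : Set (Set X)} {C' : Set (Set Z)}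
    (h : MIso B C') (hm : MCJS C') : MCJS B := by
  obtain ⟨f, hf, _h1, h2⟩ := h
  obtain ⟨g, hgf, hfg⟩ := Function.bijective_iff_has_inverse.1 hf
  have hfg' : ∀ z, f (g z) = z := hfg
  obtain ⟨le', s', hr, ht, ha, hs, hb⟩ := hm
  refine ⟨fun x y => le' (f x) (f y), fun A => g (s' (f '' A)), fun x => hr _,
    fun x y z hxy hyz => ht _ _ _ hxy hyz, fun x y hxy hyx => hf.1 (ha _ _ hxy hyx), ?_, ?_⟩
  · intro A
    constructor
    · intro a haA
      have h0 := (hs (f '' A)).1 (f a) (mem_image_of_mem f haA)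
      show le' (f a) (f (g (s' (f '' A))))
      rwa [hfg']
    · intro b hub
      have h0 : le' (s' (f '' A)) (f b) := (hs (f '' A)).2 (f b) (by
        rintro _ ⟨a, haA, rfl⟩; exact hub a haA)
      show le' (f (g (s' (f '' A)))) (f b)
      rwa [hfg']
  · intro A U hU
    have hV := hb (f '' A) (f '' U) (h2 U hU)
    constructor
    · intro hAU
      have hmem : s' (f '' A) ∈ f '' U := hV.1 (image_mono (f := f) hAU)
      obtain ⟨u, huU, hu⟩ := hmem
      have heq : g (s' (f '' A)) = u := by rw [← hu, hgf]
      show g (s' (f '' A)) ∈ U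
      rw [heq]; exact huU
    · intro hsU a haA
      have hsU' : g (s' (f '' A)) ∈ U := hsU
      have hmem : f (g (s' (f '' A))) ∈ f '' U := mem_image_of_mem f hsU'
      rw [hfg'] at hmem
      have hsub : f '' A ⊆ f '' U := hV.2 hmem
      obtain ⟨a', ha'U, ha'⟩ := hsub (mem_image_of_mem f haA)
      exact hf.1 ha' ▸ ha'U

end AuxExp

section AuxSpec

variable {X : Type*} [TopologicalSpace X]

lemma specLE_refl (x : X) : specLE x x := subset_closure rfl

lemma specLE_trans {x y z : X} (h : specLE x y) (h' : specLE y z) : specLE x z := by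
  have hsub : closure {y} ⊆ closure {x} :=
    closure_minimal (singleton_subset_iff.2 h) isClosed_closure
  exact hsub h'

lemma specLE_mem {x y : X} (h : specLE x y) {o : Set X} (ho : IsOpen o) (hy : y ∈ o) :
    x ∈ o := by
  obtain ⟨z, hz⟩ := mem_closure_iff.1 h o ho hy
  exact hz.2 ▸ hz.1

lemma specLE_of_forall {x y : X} (h : ∀ o : Set X, IsOpen o → y ∈ o → x ∈ o) : specLE x y :=
  mem_closure_iff.2 fun o ho hy => ⟨x, h o ho hy, rfl⟩

lemma specLE_antisymm [T0Space X] {x y : X} (h : specLE x y) (h' : specLE y x) : x = y := by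
  refine Inseparable.eq ?_
  rw [inseparable_iff_forall_isOpen]
  intro o ho
  exact ⟨fun hx => specLE_mem h' ho hx, fun hy => specLE_mem h ho hy⟩

lemma blob_eq (x : X) : ⋂₀ {U : Set X | IsOpen U ∧ x ∈ U} = {y | specLE y x} := by
  ext y
  simp only [mem_sInter, mem_setOf_eq]
  constructor
  · intro h
    exact specLE_of_forall fun o ho hx => h o ⟨ho, hx⟩
  · intro h U hU
    exact specLE_mem h hU.1 hU.2

lemma eq_of_base_mem [T0Space X] {B : Set (Set X)} (hB : IsMonoidalBase B) {x y : X}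
    (h : ∀ U ∈ B, x ∈ U ↔ y ∈ U) : x = y := by
  refine Inseparable.eq ?_
  rw [inseparable_iff_forall_isOpen]
  intro o ho
  constructor
  · intro hx
    obtain ⟨U, hUB, hxU, hUo⟩ := hB.is_base o ho x hx
    exact hUo ((h U hUB).1 hxU)
  · intro hy
    obtain ⟨U, hUB, hyU, hUo⟩ := hB.is_base o ho y hy
    exact hUo ((h U hUB).2 hyU)

end AuxSpec

section AuxMain

variable {X : Type*} [TopologicalSpace X] [T0Space X]

/-- (1) → (2) : the closure condition produces an 𝕄-complete join semilattice structure
for the base of open blobs. -/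
lemma mcjs_of_closure
    (hsup : ∀ A : Set X, ∃ x : X, (⋂ a ∈ A, closure {a}) = closure {x}) :
    MCJS {U : Set X | IsOpen U ∧ IsBlob U} := by
  choose s hs using hsup
  refine ⟨specLE, s, specLE_refl, fun _ _ _ => specLE_trans, fun _ _ => specLE_antisymm,
    ?_, ?_⟩
  · intro A
    constructor
    · intro a ha
      have h1 : s A ∈ closure {s A} := subset_closure rfl
      rw [← hs A] at h1
      exact mem_iInter₂.1 h1 a ha
    · intro b hb
      show b ∈ closure {s A}
      rw [← hs A]
      exact mem_iInter₂.2 hb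
  · intro A U hU
    obtain ⟨hUo, u, hu⟩ := hU
    have hUeq : U = {y | specLE y u} := by rw [hu, blob_eq]
    constructor
    · intro hAU
      rw [hUeq]
      show u ∈ closure {s A}
      rw [← hs A]
      refine mem_iInter₂.2 fun a ha => ?_
      have h2 : a ∈ {y | specLE y u} := hUeq ▸ hAU ha
      exact h2
    · intro hsAU a ha
      rw [hUeq] at hsAU ⊢
      have h1 : u ∈ closure {s A} := hsAU
      rw [← hs A] at h1
      exact mem_iInter₂.1 h1 a ha

/-- (3) → (4) : an 𝕄-complete join semilattice is isomorphic to its own exponential. -/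
lemma miso_exp {B : Set (Set X)} (hB : IsMonoidalBase B) (hm : MCJS B) :
    MIso B (expBase B) := by
  obtain ⟨le, s, hr, ht, ha, hs, hbc⟩ := hm
  have hsing : ∀ A : Set X, expMk B A = expMk B {s A} := by
    intro A
    refine (expMk_eq_iff B A {s A}).2 fun U hU => ?_
    rw [singleton_subset_iff]
    exact hbc A U hU
  refine ⟨expI B, ⟨?_, ?_⟩, ?_, ?_⟩
  · intro x y hxy
    have hxy' : expMk B {x} = expMk B {y} := hxy
    have h := (expMk_eq_iff B {x} {y}).1 hxy'
    refine eq_of_base_mem hB fun U hU => ?_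
    simpa [singleton_subset_iff] using h U hU
  · intro q
    obtain ⟨A, rfl⟩ := exp_rep B q
    exact ⟨s A, (hsing A).symm⟩
  · rintro V ⟨U, hU, rfl⟩
    have hpre : expI B ⁻¹' expBasic B U = U := by
      ext x
      simp only [mem_preimage]
      constructor
      · intro hx
        have hsub : ({x} : Set X) ⊆ U := (mem_expBasic_iff B hU {x}).1 hx
        exact singleton_subset_iff.1 hsub
      · intro hx
        exact (mem_expBasic_iff B hU {x}).2 (singleton_subset_iff.2 hx)
    rw [hpre]; exact hU
  · intro U hU
    refine ⟨U, hU, ?_⟩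
    ext q
    constructor
    · rintro ⟨x, hx, rfl⟩
      exact (mem_expBasic_iff B hU {x}).2 (singleton_subset_iff.2 hx)
    · intro hq
      obtain ⟨A, rfl⟩ := exp_rep B q
      have hAU : A ⊆ U := (mem_expBasic_iff B hU A).1 hq
      exact ⟨s A, (hbc A U hU).1 hAU, (hsing A).symm⟩

/-- (3) → (1). -/
lemma p3_to_p1 {B : Set (Set X)} (hB : IsMonoidalBase B) (hm : MCJS B) :
    IsMonoidalBase {U : Set X | IsOpen U ∧ IsBlob U} ∧
      ∀ A : Set X, ∃ x : X, (⋂ a ∈ A, closure {a}) = closure {x} := by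
  obtain ⟨le, s, hr, ht, ha, hs, hbc⟩ := hm
  -- base elements are downward closed
  have hdown : ∀ U ∈ B, ∀ x ∈ U, ∀ y, le y x → y ∈ U := by
    intro U hU x hx y hyx
    have hub : ∀ a ∈ ({x, y} : Set X), le a x := by
      intro a haxy
      rcases mem_insert_iff.1 haxy with h1 | h1
      · rw [h1]; exact hr x
      · rw [mem_singleton_iff.1 h1]; exact hyx
    have hsx : s {x, y} = x :=
      ha _ _ ((hs {x, y}).2 x hub) ((hs {x, y}).1 x (mem_insert _ _))
    have hsub := (hbc {x, y} U hU).2 (by rw [hsx]; exact hx)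
    exact hsub (mem_insert_of_mem _ rfl)
  -- the given order coincides with the specialization order
  have hle : ∀ x y : X, le x y ↔ specLE x y := by
    intro x y
    constructor
    · intro h
      refine specLE_of_forall fun o ho hy => ?_
      obtain ⟨U, hUB, hyU, hUo⟩ := hB.is_base o ho y hy
      exact hUo (hdown U hUB y hyU x h)
    · intro h
      have hyz : y = s {x, y} := by
        refine eq_of_base_mem hB fun U hU => ?_
        constructor
        · intro hyU
          have hxU : x ∈ U := specLE_mem h (hB.open_mem U hU) hyU
          refine (hbc {x, y} U hU).1 fun a haxy => ?_
          rcases mem_insert_iff.1 haxy with h1 | h1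
          · rw [h1]; exact hxU
          · rw [mem_singleton_iff.1 h1]; exact hyU
        · intro hsU
          exact (hbc {x, y} U hU).2 hsU (mem_insert_of_mem _ rfl)
      have h0 := (hs {x, y}).1 x (mem_insert _ _)
      rwa [← hyz] at h0
  -- down-sets of points are blobs
  have hd : ∀ x : X, IsBlob {y | le y x} := by
    intro x
    refine ⟨x, ?_⟩
    rw [blob_eq]
    ext y
    simp only [mem_setOf_eq]
    exact hle y x
  have hBsub : B ⊆ {U : Set X | IsOpen U ∧ IsBlob U} := by
    intro U hU
    refine ⟨hB.open_mem U hU, ?_⟩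
    have huU : s U ∈ U := (hbc U U hU).1 subset_rfl
    have hUe : U = {y | le y (s U)} := by
      ext z
      simp only [mem_setOf_eq]
      exact ⟨fun hz => (hs U).1 z hz, fun hz => hdown U hU (s U) huU z hz⟩
    rw [hUe]; exact hd (s U)
  refine ⟨⟨fun U hU => hU.1, ?_, hBsub hB.univ_mem, ?_⟩, ?_⟩
  · intro V hV x hx
    obtain ⟨U, hUB, hxU, hUV⟩ := hB.is_base V hV x hx
    exact ⟨U, hBsub hUB, hxU, hUV⟩
  · rintro U ⟨hUo, u, hu⟩ V ⟨hVo, v, hv⟩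
    refine ⟨hUo.inter hVo, ?_⟩
    have hUeq : U = {y | le y u} := by
      rw [hu, blob_eq]
      ext y
      simp only [mem_setOf_eq]
      exact (hle y u).symm
    have hVeq : V = {y | le y v} := by
      rw [hv, blob_eq]
      ext y
      simp only [mem_setOf_eq]
      exact (hle y v).symm
    have key : U ∩ V = {y | le y (s (U ∩ V))} := by
      ext z
      simp only [mem_setOf_eq]
      constructor
      · intro hz; exact (hs (U ∩ V)).1 z hz
      · intro hz
        have hwu : le (s (U ∩ V)) u := by
          refine (hs (U ∩ V)).2 u fun a haA => ?_
          have h1 : a ∈ U := haA.1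
          rw [hUeq] at h1; exact h1
        have hwv : le (s (U ∩ V)) v := by
          refine (hs (U ∩ V)).2 v fun a haA => ?_
          have h1 : a ∈ V := haA.2
          rw [hVeq] at h1; exact h1
        constructor
        · rw [hUeq]; exact ht _ _ _ hz hwu
        · rw [hVeq]; exact ht _ _ _ hz hwv
    rw [key]; exact hd _
  · intro A
    refine ⟨s A, ?_⟩
    ext y
    simp only [mem_iInter]
    constructor
    · intro h
      have h1 : le (s A) y := (hs A).2 y fun a haA => (hle a y).2 (h a haA)
      exact (hle _ _).1 h1
    · intro h a haA
      have h1 : le (s A) y := (hle _ _).2 h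
      exact (hle a y).1 (ht _ _ _ ((hs A).1 a haA) h1)

end AuxMain

/-- topological characterization of exponentials: for a `T₀` space `X`,
the five conditions below are equivalent (stated as a chain of iffs):
(1) the open blobs form a monoidal base and every `⋂_{x ∈ A} cl {x}` is the closure of a
point; (2) `(X, open blobs)` is an 𝕄-complete join semilattice; (3) some monoidal base
makes `X` an 𝕄-complete join semilattice; (4) `(X,B) ≅ E(X,B)` for some monoidal base `B`;
(5) `(X,B) ≅ E(Y,C)` for some monoidal base `B` and some object `(Y,C)` of 𝕄. -/
theorem stmt9 {X : Type u} [TopologicalSpace X] [T0Space X] :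
    ((IsMonoidalBase {U : Set X | IsOpen U ∧ IsBlob U} ∧
        ∀ A : Set X, ∃ x : X, (⋂ a ∈ A, closure {a}) = closure {x}) ↔
      (IsMonoidalBase {U : Set X | IsOpen U ∧ IsBlob U} ∧
        MCJS {U : Set X | IsOpen U ∧ IsBlob U})) ∧
    ((IsMonoidalBase {U : Set X | IsOpen U ∧ IsBlob U} ∧
        MCJS {U : Set X | IsOpen U ∧ IsBlob U}) ↔
      (∃ B : Set (Set X), IsMonoidalBase B ∧ MCJS B)) ∧
    ((∃ B : Set (Set X), IsMonoidalBase B ∧ MCJS B) ↔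
      (∃ B : Set (Set X), IsMonoidalBase B ∧ MIso B (expBase B))) ∧
    ((∃ B : Set (Set X), IsMonoidalBase B ∧ MIso B (expBase B)) ↔
      (∃ B : Set (Set X), IsMonoidalBase B ∧
        ∃ (Y : Type u) (_ : TopologicalSpace Y) (_ : T0Space Y) (C : Set (Set Y)),
          IsMonoidalBase C ∧ MIso B (expBase C))) := by
  have h12 : (IsMonoidalBase {U : Set X | IsOpen U ∧ IsBlob U} ∧
        ∀ A : Set X, ∃ x : X, (⋂ a ∈ A, closure {a}) = closure {x}) →
      (IsMonoidalBase {U : Set X | IsOpen U ∧ IsBlob U} ∧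
        MCJS {U : Set X | IsOpen U ∧ IsBlob U}) :=
    fun ⟨hb, hc⟩ => ⟨hb, mcjs_of_closure hc⟩
  have h23 : (IsMonoidalBase {U : Set X | IsOpen U ∧ IsBlob U} ∧
        MCJS {U : Set X | IsOpen U ∧ IsBlob U}) →
      (∃ B : Set (Set X), IsMonoidalBase B ∧ MCJS B) :=
    fun ⟨hb, hm⟩ => ⟨_, hb, hm⟩
  have h31 : (∃ B : Set (Set X), IsMonoidalBase B ∧ MCJS B) →
      (IsMonoidalBase {U : Set X | IsOpen U ∧ IsBlob U} ∧
        ∀ A : Set X, ∃ x : X, (⋂ a ∈ A, closure {a}) = closure {x}) :=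
    fun ⟨_, hB, hm⟩ => p3_to_p1 hB hm
  have h34 : (∃ B : Set (Set X), IsMonoidalBase B ∧ MCJS B) →
      (∃ B : Set (Set X), IsMonoidalBase B ∧ MIso B (expBase B)) :=
    fun ⟨B, hB, hm⟩ => ⟨B, hB, miso_exp hB hm⟩
  have h45 : (∃ B : Set (Set X), IsMonoidalBase B ∧ MIso B (expBase B)) →
      (∃ B : Set (Set X), IsMonoidalBase B ∧
        ∃ (Y : Type u) (_ : TopologicalSpace Y) (_ : T0Space Y) (C : Set (Set Y)),
          IsMonoidalBase C ∧ MIso B (expBase C)) :=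
    fun ⟨B, hB, hi⟩ => ⟨B, hB, X, ‹_›, ‹_›, B, hB, hi⟩
  have h53 : (∃ B : Set (Set X), IsMonoidalBase B ∧
        ∃ (Y : Type u) (_ : TopologicalSpace Y) (_ : T0Space Y) (C : Set (Set Y)),
          IsMonoidalBase C ∧ MIso B (expBase C)) →
      (∃ B : Set (Set X), IsMonoidalBase B ∧ MCJS B) :=
    fun ⟨B, hB, _, _, _, C, _, hi⟩ => ⟨B, hB, mcjs_transport hi (mcjs_exp C)⟩
  refine ⟨⟨h12, fun h => h31 (h23 h)⟩, ⟨h23, fun h => h12 (h31 h)⟩,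
    ⟨h34, fun h => h53 (h45 h)⟩, ⟨h45, fun h => h34 (h53 h)⟩⟩
end

section
/- Let X be a topological space. The following are equivalent: (1) X is homeomorphic to Spec(M) for some commutative monoid M; (2) X is T₀ and there is a monoidal base B of X such that (X, B) is an 𝕄-complete join semilattice and the map φ : X → Spec(B, ∩) given by φ(x) = {U ∈ B : x ∉ U} is a bijection. -/
open Set Topology TopologicalSpace

universe u v

section KatoAux

variable {M : Type*} [CommMonoid M]

lemma katoD_one : KatoD (1 : M) = Set.univ := by
  ext p; simp [KatoD, p.2.2.1]

lemma katoD_mul (f g : M) : KatoD (f * g) = KatoD f ∩ KatoD g := by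
  ext p
  constructor
  · intro hfg
    constructor
    · intro hf; exact hfg (p.2.1 f hf g)
    · intro hg; exact hfg (by rw [mul_comm]; exact p.2.1 g hg f)
  · rintro ⟨hf, hg⟩; exact p.2.2.2 f g hf hg

lemma isOpen_katoD (f : M) : IsOpen (KatoD f) :=
  TopologicalSpace.isOpen_generateFrom_of_mem ⟨f, rfl⟩

lemma katoSpec_basis :
    TopologicalSpace.IsTopologicalBasis (Set.range fun f : M => KatoD f) := by
  refine ⟨?_, ?_, rfl⟩
  · rintro _ ⟨f, rfl⟩ _ ⟨g, rfl⟩ p hp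
    exact ⟨KatoD (f * g), ⟨f * g, rfl⟩, by rwa [katoD_mul], by rw [katoD_mul]⟩
  · apply Set.eq_univ_of_univ_subset
    intro p _
    exact Set.mem_sUnion.2 ⟨KatoD 1, ⟨1, rfl⟩, by simp [katoD_one]⟩

instance : T0Space (KatoSpec M) := by
  refine ⟨fun p q hpq => ?_⟩
  apply Subtype.ext
  ext f
  have h1 := (inseparable_iff_forall_isOpen.1 hpq) (KatoD f) (isOpen_katoD f)
  exact not_iff_not.mp (by simpa [KatoD] using h1)

lemma katoPrime_iUnion {ι : Sort*} (p : ι → KatoSpec M) :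
    IsMonoidPrime (⋃ i, (p i).1) := by
  refine ⟨?_, ?_, ?_⟩
  · intro x hx m
    simp only [Set.mem_iUnion] at hx ⊢
    obtain ⟨i, hi⟩ := hx
    exact ⟨i, (p i).2.1 x hi m⟩
  · simp only [Set.mem_iUnion, not_exists]
    exact fun i => (p i).2.2.1
  · intro x y hx hy
    simp only [Set.mem_iUnion, not_exists] at hx hy ⊢
    exact fun i => (p i).2.2.2 x y (hx i) (hy i)

end KatoAux

lemma phi_prime {X : Type*} [TopologicalSpace X] {B : Set (Set X)} (hB : IsMonoidalBase B)
    (x : X) : @IsMonoidPrime ↥B (baseMonoid hB) {U : ↥B | x ∉ (U : Set X)} := by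
  letI := baseMonoid hB
  refine ⟨?_, ?_, ?_⟩
  · intro U hU V hx
    exact hU (Set.mem_of_mem_inter_left (show x ∈ (U : Set X) ∩ (V : Set X) from hx))
  · intro h1
    exact h1 (show x ∈ (Set.univ : Set X) from Set.mem_univ x)
  · intro U V hU hV
    simp only [Set.mem_setOf_eq, not_not] at hU hV
    intro hx
    exact hx (show x ∈ (U : Set X) ∩ (V : Set X) from ⟨hU, hV⟩)

/-- Proposition 3.1 of the paper: `X` is homeomorphic to the Kato
spectrum of some commutative monoid iff `X` is `T₀` and there is a monoidal base `B` making
`(X,B)` an 𝕄-complete join semilattice such that `φ : x ↦ {U ∈ B : x ∉ U}` is a bijection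
from `X` onto `Spec(B, ∩)` (the set of prime ideals of the monoid `(B, ∩)`). -/
theorem stmt10 {X : Type u} [TopologicalSpace X] :
    (∃ (M : Type u) (_ : CommMonoid M), Nonempty (X ≃ₜ KatoSpec M)) ↔
      (T0Space X ∧ ∃ (B : Set (Set X)) (hB : IsMonoidalBase B), MCJS B ∧
        Set.BijOn (fun x : X => {U : ↥B | x ∉ (U : Set X)}) Set.univ
          {p : Set ↥B | @IsMonoidPrime ↥B (baseMonoid hB) p}) := by
  constructor
  · rintro ⟨M, _, ⟨h⟩⟩
    haveI : T0Space X := h.isEmbedding.t0Space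
    set Bs : Set (Set X) := Set.range (fun f : M => h ⁻¹' KatoD f) with hBsdef
    have hB : IsMonoidalBase Bs := by
      refine ⟨?_, ?_, ?_, ?_⟩
      · rintro _ ⟨f, rfl⟩
        exact (isOpen_katoD f).preimage h.continuous
      · intro V hV x hx
        have hV' : IsOpen (h '' V) := h.isOpenMap V hV
        obtain ⟨_, ⟨f, rfl⟩, hx1, hx2⟩ :=
          katoSpec_basis.exists_subset_of_mem_open (Set.mem_image_of_mem h hx) hV'
        refine ⟨h ⁻¹' KatoD f, ⟨f, rfl⟩, hx1, fun y hy => ?_⟩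
        obtain ⟨z, hz, hzy⟩ := hx2 hy
        rwa [← h.injective hzy]
      · exact ⟨1, by simp [katoD_one]⟩
      · rintro _ ⟨f, rfl⟩ _ ⟨g, rfl⟩
        refine ⟨f * g, ?_⟩
        show h ⁻¹' KatoD (f * g) = h ⁻¹' KatoD f ∩ h ⁻¹' KatoD g
        rw [katoD_mul, Set.preimage_inter]
    have hM : MCJS Bs := by
      refine ⟨fun x y => (h x).1 ⊆ (h y).1,
        fun A => h.symm ⟨⋃ a : A, (h a.1).1, katoPrime_iUnion _⟩, ?_, ?_, ?_, ?_, ?_⟩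
      · exact fun x => Set.Subset.rfl
      · exact fun x y z => Set.Subset.trans
      · intro x y hxy hyx
        exact h.injective (Subtype.ext (Set.Subset.antisymm hxy hyx))
      · intro A
        have hs : (h (h.symm ⟨⋃ a : A, (h a.1).1, katoPrime_iUnion _⟩)).1
            = ⋃ a : A, (h a.1).1 := by erw [h.apply_symm_apply]
        constructor
        · intro a ha
          rw [hs]
          exact Set.subset_iUnion (fun b : A => (h b.1).1) ⟨a, ha⟩
        · intro b hb
          rw [hs]
          exact Set.iUnion_subset fun a => hb a.1 a.2
      · rintro A _ ⟨f, rfl⟩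
        erw [Set.mem_preimage, h.apply_symm_apply]
        show A ⊆ h ⁻¹' KatoD f ↔ f ∉ ⋃ a : A, (h a.1).1
        simp only [Set.mem_iUnion, not_exists]
        constructor
        · rintro hA ⟨a, ha⟩
          exact hA ha
        · intro hA a ha
          exact hA ⟨a, ha⟩
    refine ⟨inferInstance, Bs, hB, hM, fun x _ => phi_prime hB x, ?_, ?_⟩
    · intro x _ y _ hxy
      have hmem : ∀ U ∈ Bs, (x ∈ U ↔ y ∈ U) := fun U hU =>
        not_iff_not.mp (Set.ext_iff.1 hxy ⟨U, hU⟩)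
      refine Inseparable.eq (inseparable_iff_forall_isOpen.2 fun s hs => ?_)
      constructor
      · intro hxs
        obtain ⟨U, hU, hxU, hUs⟩ := hB.is_base s hs x hxs
        exact hUs ((hmem U hU).1 hxU)
      · intro hys
        obtain ⟨U, hU, hyU, hUs⟩ := hB.is_base s hs y hys
        exact hUs ((hmem U hU).2 hyU)
    · intro p hp
      letI := baseMonoid hB
      have hp' : @IsMonoidPrime ↥Bs (baseMonoid hB) p := hp
      set q : Set M := {f : M | (⟨h ⁻¹' KatoD f, ⟨f, rfl⟩⟩ : ↥Bs) ∈ p} with hqdef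
      have hmulD : ∀ f g : M, (⟨h ⁻¹' KatoD (f * g), ⟨f * g, rfl⟩⟩ : ↥Bs)
          = (⟨h ⁻¹' KatoD f, ⟨f, rfl⟩⟩ : ↥Bs) * (⟨h ⁻¹' KatoD g, ⟨g, rfl⟩⟩ : ↥Bs) := by
        intro f g
        refine Subtype.ext ?_
        show h ⁻¹' KatoD (f * g) = h ⁻¹' KatoD f ∩ h ⁻¹' KatoD g
        rw [katoD_mul, Set.preimage_inter]
      have hqprime : IsMonoidPrime q := by
        refine ⟨?_, ?_, ?_⟩
        · intro f hf m
          show (⟨h ⁻¹' KatoD (f * m), ⟨f * m, rfl⟩⟩ : ↥Bs) ∈ p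
          rw [hmulD f m]
          exact hp'.1 _ hf _
        · show (⟨h ⁻¹' KatoD (1 : M), ⟨1, rfl⟩⟩ : ↥Bs) ∉ p
          have h1 : (⟨h ⁻¹' KatoD (1 : M), ⟨1, rfl⟩⟩ : ↥Bs) = 1 := by
            refine Subtype.ext ?_
            show h ⁻¹' KatoD (1 : M) = Set.univ
            rw [katoD_one, Set.preimage_univ]
          rw [h1]
          exact hp'.2.1
        · intro f g hf hg
          show (⟨h ⁻¹' KatoD (f * g), ⟨f * g, rfl⟩⟩ : ↥Bs) ∉ p
          rw [hmulD f g]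
          exact hp'.2.2 _ _ hf hg
      refine ⟨h.symm ⟨q, hqprime⟩, Set.mem_univ _, ?_⟩
      ext U
      obtain ⟨U, hU⟩ := U
      obtain ⟨f, rfl⟩ := hU
      have hkey : h.symm ⟨q, hqprime⟩ ∉ (fun f : M => h ⁻¹' KatoD f) f ↔ f ∈ q := by
        erw [Set.mem_preimage, h.apply_symm_apply]
        exact not_not
      exact hkey
  · rintro ⟨hT0, B, hB, -, hbij⟩
    letI : CommMonoid ↥B := baseMonoid hB
    refine ⟨↥B, inferInstance, ⟨?_⟩⟩
    set φ : X → KatoSpec ↥B :=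
      fun x => ⟨{U : ↥B | x ∉ (U : Set X)}, hbij.mapsTo (Set.mem_univ x)⟩ with hφdef
    have hbij' : Function.Bijective φ := by
      constructor
      · intro x y hxy
        exact hbij.injOn (Set.mem_univ x) (Set.mem_univ y) (congrArg Subtype.val hxy)
      · intro P
        obtain ⟨x, -, hx⟩ := hbij.surjOn P.2
        exact ⟨x, Subtype.ext hx⟩
    have hpre : ∀ U : ↥B, φ ⁻¹' KatoD U = (U : Set X) := by
      intro U
      ext x
      exact not_not
    have himg : ∀ U : ↥B, φ '' (U : Set X) = KatoD U := by
      intro U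
      ext P
      constructor
      · rintro ⟨x, hx, rfl⟩
        exact not_not.mpr hx
      · intro hP
        obtain ⟨x, rfl⟩ := hbij'.2 P
        refine ⟨x, ?_, rfl⟩
        exact not_not.mp hP
    have hcont : Continuous φ := by
      apply continuous_generateFrom_iff.2
      rintro _ ⟨U, rfl⟩
      rw [hpre U]
      exact hB.open_mem _ U.2
    have hopen : IsOpenMap φ := by
      intro V hV
      rw [isOpen_iff_forall_mem_open]
      rintro _ ⟨x, hx, rfl⟩
      obtain ⟨U, hU, hxU, hUV⟩ := hB.is_base V hV x hx
      refine ⟨KatoD (⟨U, hU⟩ : ↥B), ?_, isOpen_katoD _, ?_⟩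
      · rw [← himg ⟨U, hU⟩]
        exact Set.image_mono (f := φ) hUV
      · rw [← himg ⟨U, hU⟩]
        exact ⟨x, hxU, rfl⟩
    exact (Equiv.ofBijective φ hbij').toHomeomorphOfContinuousOpen hcont hopen
end
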